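/- arXiv:1804.10590 — 4 statements merged into one kernel-verified Lean document; each statement's English description precedes it below -/
import Mathlib

section
/- For constants E_S > 0 and λ_1, ..., λ_M > 0, define f(d) = ρ(d)/(1-ρ(d)) where ρ(d) = E_S · Σ_{i=1}^M λ_i/(1+λ_i d). Let d_0 ≥ 0 be such that ρ(d_0) = 1 (if it exists; otherwise d_0 = 0 with ρ(0) < 1). Then f is strictly decreasing on (d_0, ∞), and the fixed point equation f(d) = d has exactly one solution d* in (d_0, ∞); moreover at this solution ρ(d*) < 1. -/
open Set Filter Topology

/-- For the M/G/1 approximation of the multicast queue, with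
`ρ d = E_S * ∑ i, λ i / (1 + λ i * d)` and `f d = ρ d / (1 - ρ d)`, the function `f`
is strictly decreasing on `(d₀, ∞)` and the fixed-point equation `f d = d` has exactly
one solution there; at this solution `ρ d < 1`. -/
theorem multicast_fixed_point_unique
    (M : ℕ) (hM : 0 < M) (ES : ℝ) (hES : 0 < ES)
    (lam : Fin M → ℝ) (hlam : ∀ i, 0 < lam i)
    (ρ f : ℝ → ℝ)
    (hρ : ∀ d, ρ d = ES * ∑ i, lam i / (1 + lam i * d))
    (hf : ∀ d, f d = ρ d / (1 - ρ d))
    (d₀ : ℝ) (hd₀ : 0 ≤ d₀)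
    (hd₀spec : ρ d₀ = 1 ∨ (d₀ = 0 ∧ ρ 0 < 1)) :
    StrictAntiOn f (Ioi d₀) ∧
    (∃! d, d ∈ Ioi d₀ ∧ f d = d) ∧
    (∀ d ∈ Ioi d₀, f d = d → ρ d < 1) := by
  have hne : (Finset.univ : Finset (Fin M)).Nonempty := by
    have : Nonempty (Fin M) := Fin.pos_iff_nonempty.mp hM
    exact Finset.univ_nonempty
  have hden : ∀ (i : Fin M) (d : ℝ), 0 ≤ d → 0 < 1 + lam i * d := by
    intro i d hd
    nlinarith [hlam i]
  have hρpos : ∀ d, 0 ≤ d → 0 < ρ d := by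
    intro d hd
    rw [hρ]
    exact mul_pos hES (Finset.sum_pos (fun i _ => div_pos (hlam i) (hden i d hd)) hne)
  have hρanti : StrictAntiOn ρ (Ici 0) := by
    intro a ha b hb hab
    rw [hρ, hρ]
    refine mul_lt_mul_of_pos_left ?_ hES
    refine Finset.sum_lt_sum_of_nonempty hne (fun i _ => ?_)
    refine div_lt_div_of_pos_left (hlam i) (hden i a ha) ?_
    nlinarith [hlam i, mem_Ici.mp ha]
  have hsub : Ioi d₀ ⊆ Ici (0:ℝ) := fun x hx => le_of_lt (lt_of_le_of_lt hd₀ hx)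
  have hρlt1 : ∀ d, d₀ < d → ρ d < 1 := by
    intro d hd
    rcases hd₀spec with h1 | ⟨h0, hlt⟩
    · have := hρanti (mem_Ici.mpr hd₀) (hsub hd) hd
      linarith
    · subst h0
      have := hρanti (mem_Ici.mpr le_rfl) (hsub hd) hd
      linarith
  -- strict antitonicity of f
  have hfanti : StrictAntiOn f (Ioi d₀) := by
    intro a ha b hb hab
    have hpa := hρpos a (hsub ha)
    have hpb := hρpos b (hsub hb)
    have h1a := hρlt1 a ha
    have h1b := hρlt1 b hb
    have hlt := hρanti (hsub ha) (hsub hb) hab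
    rw [hf, hf]
    rw [div_lt_div_iff₀ (by linarith) (by linarith)]
    nlinarith
  -- continuity of ρ on Ici 0
  have hρeq : ρ = fun d => ES * ∑ i, lam i / (1 + lam i * d) := funext hρ
  have hρcont : ContinuousOn ρ (Ici 0) := by
    rw [hρeq]
    refine continuousOn_const.mul ?_
    refine continuousOn_finset_sum _ (fun i _ => ?_)
    refine ContinuousOn.div continuousOn_const (by fun_prop) (fun d hd => ?_)
    exact (hden i d hd).ne'
  -- choose the right endpoint b
  set b : ℝ := max (2 * ES * M) (max 2 (d₀ + 1)) with hbdef
  have hb2 : (2:ℝ) ≤ b := le_trans (le_max_left _ _) (le_max_right _ _)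
  have hbd₀ : d₀ < b := lt_of_lt_of_le (by linarith) (le_trans (le_max_right _ _) (le_max_right _ _))
  have hbES : 2 * ES * M ≤ b := le_max_left _ _
  have hbpos : (0:ℝ) < b := by linarith
  have hρb : ρ b ≤ 1 / 2 := by
    have hsum : (∑ i, lam i / (1 + lam i * b)) ≤ M * (1 / b) := by
      calc (∑ i, lam i / (1 + lam i * b)) ≤ ∑ _i : Fin M, 1 / b :=
            Finset.sum_le_sum (fun i _ => by
              rw [div_le_div_iff₀ (hden i b hbpos.le) hbpos]; nlinarith [hlam i])
        _ = M * (1 / b) := by simp [Finset.sum_const, mul_comm]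
    have h1 : ρ b ≤ ES * (M * (1 / b)) := by
      rw [hρ]; exact mul_le_mul_of_nonneg_left hsum hES.le
    have hM1 : (1:ℝ) ≤ M := by exact_mod_cast hM
    have h2 : ES * ((M : ℝ) * (1 / b)) ≤ 1 / 2 := by
      rw [show ES * ((M : ℝ) * (1 / b)) = (ES * M) / b by ring,
        div_le_div_iff₀ hbpos (by norm_num : (0:ℝ) < 2)]
      nlinarith
    linarith
  have hfb : f b < b := by
    have hpb := hρpos b hbpos.le
    rw [hf, div_lt_iff₀ (by linarith)]
    nlinarith
  -- find a left point a with d₀ < a < b and a < f a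
  have hexa : ∃ a, d₀ < a ∧ a < b ∧ a < f a := by
    rcases hd₀spec with h1 | ⟨h0, hlt⟩
    · -- ρ d₀ = 1 : f blows up near d₀
      set c : ℝ := (d₀ + 1) / (d₀ + 2) with hcdef
      have hc1 : c < 1 := by
        rw [hcdef, div_lt_one (by linarith)]; linarith
      have hcpos : 0 < c := by positivity
      have htend : Tendsto ρ (𝓝[>] d₀) (𝓝 1) := by
        have := (hρcont d₀ (mem_Ici.mpr hd₀)).tendsto
        rw [h1] at this
        exact this.mono_left (nhdsWithin_mono _ (fun x hx => hsub hx)) |>.mono_left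
          (le_refl _)
      have hev1 : ∀ᶠ x in 𝓝[>] d₀, c < ρ x := htend.eventually (eventually_gt_nhds hc1)
      have hev2 : Ioo d₀ (min b (d₀ + 1)) ∈ 𝓝[>] d₀ := by
        refine Ioo_mem_nhdsGT_of_mem ⟨le_rfl, ?_⟩
        exact lt_min hbd₀ (by linarith)
      rcases (hev1.and hev2).exists with ⟨a, hca, ha1, ha2⟩
      have hab : a < b := lt_of_lt_of_le ha2 (min_le_left _ _)
      have had1 : a < d₀ + 1 := lt_of_lt_of_le ha2 (min_le_right _ _)
      refine ⟨a, ha1, hab, ?_⟩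
      have hρa1 : ρ a < 1 := hρlt1 a ha1
      have hd2 : (0:ℝ) < d₀ + 2 := by linarith
      have hcval : c * (d₀ + 2) = d₀ + 1 := by
        rw [hcdef, div_mul_cancel₀]; exact hd2.ne'
      rw [hf, lt_div_iff₀ (by linarith)]
      nlinarith [hd₀.trans ha1.le]
    · -- d₀ = 0, ρ 0 < 1
      subst h0
      have hρ0 := hρpos 0 le_rfl
      have htend : Tendsto ρ (𝓝[>] (0:ℝ)) (𝓝 (ρ 0)) :=
        ((hρcont 0 (mem_Ici.mpr le_rfl)).tendsto).mono_left
          (nhdsWithin_mono _ (fun x hx => hsub hx))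
      have hev1 : ∀ᶠ x in 𝓝[>] (0:ℝ), ρ 0 / 2 < ρ x :=
        htend.eventually (eventually_gt_nhds (by linarith))
      have hev2 : Ioo (0:ℝ) (min b (ρ 0 / 2)) ∈ 𝓝[>] (0:ℝ) := by
        refine Ioo_mem_nhdsGT_of_mem ⟨le_rfl, ?_⟩
        exact lt_min hbpos (by linarith)
      rcases (hev1.and hev2).exists with ⟨a, hca, ha1, ha2⟩
      have hab : a < b := lt_of_lt_of_le ha2 (min_le_left _ _)
      refine ⟨a, ha1, hab, ?_⟩
      have hρa1 : ρ a < 1 := hρlt1 a ha1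
      have : a < ρ a := lt_of_lt_of_le (lt_of_lt_of_le ha2 (min_le_right _ _)) hca.le
      rw [hf, lt_div_iff₀ (by linarith)]
      nlinarith
  rcases hexa with ⟨a, hd₀a, hab, hafa⟩
  -- continuity of f on Icc a b
  have hIccsub : Icc a b ⊆ Ioi d₀ := fun x hx => lt_of_lt_of_le hd₀a hx.1
  have hfcont : ContinuousOn (fun d => f d - d) (Icc a b) := by
    have hfeq : f = fun d => ρ d / (1 - ρ d) := funext hf
    rw [hfeq]
    refine ContinuousOn.sub ?_ continuousOn_id
    refine ContinuousOn.div (hρcont.mono (fun x hx => hsub (hIccsub hx)))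
      (continuousOn_const.sub (hρcont.mono (fun x hx => hsub (hIccsub hx)))) ?_
    intro x hx
    have := hρlt1 x (hIccsub hx)
    intro hcon
    rw [sub_eq_zero] at hcon
    linarith [hcon]
  -- intermediate value
  have hmem : (0:ℝ) ∈ Icc ((fun d => f d - d) b) ((fun d => f d - d) a) := by
    constructor
    · simp only; linarith
    · simp only; linarith
  have hivt := intermediate_value_Icc' hab.le hfcont hmem
  rcases hivt with ⟨d, hdmem, hdeq⟩
  have hdfix : f d = d := by
    simpa [sub_eq_zero] using hdeq
  have hdIoi : d ∈ Ioi d₀ := hIccsub hdmem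
  refine ⟨hfanti, ⟨d, ⟨hdIoi, hdfix⟩, ?_⟩, fun x hx _ => hρlt1 x hx⟩
  rintro y ⟨hy, hyfix⟩
  rcases lt_trichotomy y d with h | h | h
  · have := hfanti hy hdIoi h
    rw [hyfix, hdfix] at this
    exact absurd this (not_lt.mpr h.le)
  · exact h
  · have := hfanti hdIoi hy h
    rw [hyfix, hdfix] at this
    exact absurd this (not_lt.mpr h.le)
end

section
/- Let E_S > 0, M ≥ 1, and λ_1 = ... = λ_M = λ. As λ → ∞, the unique fixed point d*(λ) of d = ρ(d)/(1-ρ(d)) with ρ(d) = E_S·Σ_i λ/(1+λd) converges to d∞ = (E_S·M/2)·(1 + √(1 + 4/(M·E_S))), which is the unique positive solution of d = E_S·M/(d - E_S·M). -/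
/-!
Writing `a = E_S M`, the fixed-point equation at rate `λ` clears to the quadratic
`d² - (a - 1/λ) d - a = 0`, whose unique positive root is `(b + √(b² + 4a))/2` with
`b = a - 1/λ`. This root depends continuously on `b`, so as `λ → ∞` it tends to the positive
root of `d² - a d - a = 0`, which is both `d∞` and the unique positive solution of
`d = a/(d - a)`.
-/

open Filter

noncomputable def posRoot (b c : ℝ) : ℝ := (b + √(b ^ 2 + 4 * c)) / 2

lemma posRoot_sq_sub_mul_sub {b c : ℝ} (h : 0 ≤ b ^ 2 + 4 * c) :
    posRoot b c ^ 2 - b * posRoot b c - c = 0 := by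
  unfold posRoot
  linear_combination Real.sq_sqrt h / 4

lemma posRoot_pos {b c : ℝ} (hc : 0 < c) : 0 < posRoot b c := by
  have hlt : |b| < √(b ^ 2 + 4 * c) := by
    rw [← Real.sqrt_sq_eq_abs]
    exact Real.sqrt_lt_sqrt (sq_nonneg b) (by linarith)
  unfold posRoot
  linarith [neg_abs_le b]

lemma eq_posRoot_of_sq_sub_mul_sub {b c d : ℝ} (hd : 0 < d)
    (h : d ^ 2 - b * d - c = 0) (hc : 0 < c) : d = posRoot b c := by
  have hpos : 0 < 2 * d - b := by nlinarith
  have hsqrt : √(b ^ 2 + 4 * c) = 2 * d - b := by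
    rw [show b ^ 2 + 4 * c = (2 * d - b) ^ 2 by linear_combination (-4) * h]
    exact Real.sqrt_sq hpos.le
  rw [posRoot, hsqrt]
  ring

lemma continuous_posRoot_left (c : ℝ) : Continuous fun b => posRoot b c := by
  unfold posRoot
  fun_prop

lemma eq_div_sub_self_iff {a d : ℝ} (ha : a ≠ 0) :
    d = a / (d - a) ↔ d ^ 2 - a * d - a = 0 := by
  rcases eq_or_ne (d - a) 0 with hda | hda
  · obtain rfl : d = a := sub_eq_zero.mp hda
    simp [ha, sq]
  · rw [eq_div_iff hda]
    constructor <;> intro h <;> linear_combination h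

lemma sq_sub_mul_sub_eq_zero_of_eq_div_one_sub {a lam d : ℝ} (hlam : lam ≠ 0)
    (hden : 1 + lam * d ≠ 0) (hρ : a * lam / (1 + lam * d) ≠ 1)
    (hfix : d = a * lam / (1 + lam * d) / (1 - a * lam / (1 + lam * d))) :
    d ^ 2 - (a - lam⁻¹) * d - a = 0 := by
  have hden' : 1 + lam * d - a * lam ≠ 0 := by
    intro h
    apply hρ
    rw [div_eq_one_iff_eq hden]
    linarith
  have hsimp : a * lam / (1 + lam * d) / (1 - a * lam / (1 + lam * d)) =
      a * lam / (1 + lam * d - a * lam) := by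
    field_simp
  rw [hsimp, eq_div_iff hden'] at hfix
  field_simp
  linear_combination hfix

lemma posRoot_self {a : ℝ} (ha : 0 < a) : posRoot a a = a / 2 * (1 + √(1 + 4 / a)) := by
  have hsqrt : √(a ^ 2 + 4 * a) = a * √(1 + 4 / a) := by
    rw [show a ^ 2 + 4 * a = a ^ 2 * (1 + 4 / a) by field_simp, Real.sqrt_mul (sq_nonneg a),
      Real.sqrt_sq ha.le]
  rw [posRoot, hsqrt]
  ring

/-- In the symmetric case `λ₁ = ⋯ = λ_M = λ`, the unique fixed point
`d*(λ)` of `d = ρ(d)/(1-ρ(d))` with `ρ(d) = E_S * M * λ/(1+λ d)` converges, as `λ → ∞`,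
to `d∞ = (E_S M / 2)(1 + √(1 + 4/(M E_S)))`, the unique positive solution of
`d = E_S M / (d - E_S M)`. -/
theorem multicast_fixed_point_limit
    (M : ℕ) (hM : 1 ≤ M) (ES : ℝ) (hES : 0 < ES)
    (ρ : ℝ → ℝ → ℝ)
    (hρ : ∀ lam d, ρ lam d = ES * (M : ℝ) * lam / (1 + lam * d))
    (dstar : ℝ → ℝ)
    (hfix : ∀ lam, 0 < lam →
      0 < dstar lam ∧ ρ lam (dstar lam) < 1 ∧
      dstar lam = ρ lam (dstar lam) / (1 - ρ lam (dstar lam)))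
    (dinf : ℝ)
    (hdinf : dinf = (ES * M / 2) * (1 + Real.sqrt (1 + 4 / ((M : ℝ) * ES)))) :
    Tendsto dstar atTop (nhds dinf) ∧
    (0 < dinf ∧ dinf = ES * M / (dinf - ES * M)) ∧
    (∀ d : ℝ, 0 < d → d = ES * M / (d - ES * M) → d = dinf) := by
  have ha : 0 < ES * M := mul_pos hES (Nat.cast_pos.mpr hM)
  set a := ES * (M : ℝ)
  have hdinf_root : dinf = posRoot a a := by rw [hdinf, posRoot_self ha, mul_comm (M : ℝ) ES]
  have hdstar_root : ∀ lam, 0 < lam → dstar lam = posRoot (a - lam⁻¹) a := by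
    intro lam hlam
    obtain ⟨hpos, hlt, heq⟩ := hfix lam hlam
    rw [hρ] at hlt heq
    exact eq_posRoot_of_sq_sub_mul_sub hpos
      (sq_sub_mul_sub_eq_zero_of_eq_div_one_sub hlam.ne' (by positivity) hlt.ne heq) ha
  have hrate : Tendsto (fun lam : ℝ => a - lam⁻¹) atTop (nhds a) := by
    simpa using tendsto_const_nhds.sub (tendsto_inv_atTop_zero (𝕜 := ℝ))
  refine ⟨?_, ⟨?_, ?_⟩, fun d hd hfix_d => ?_⟩
  · rw [hdinf_root]
    refine ((continuous_posRoot_left a).tendsto a |>.comp hrate).congr' ?_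
    filter_upwards [eventually_gt_atTop 0] with lam hlam
    exact (hdstar_root lam hlam).symm
  · exact hdinf_root ▸ posRoot_pos ha
  · rw [eq_div_sub_self_iff ha.ne', hdinf_root]
    exact posRoot_sq_sub_mul_sub (by positivity)
  · rw [hdinf_root]
    exact eq_posRoot_of_sq_sub_mul_sub hd ((eq_div_sub_self_iff ha.ne').mp hfix_d) ha
end

section
/- Fix d > d_0 where ρ(d) < 1. If any single rate λ_k is increased (keeping all other λ_i and E_S fixed), then ρ(d) strictly increases and hence f(d) = ρ(d)/(1-ρ(d)) strictly increases; consequently, the unique fixed point d* of f(d) = d in (d_0, ∞) is strictly increasing in each λ_k. -/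
open Set

/-- Increasing a single rate `λ_k` (with `d`, `E_S` and the other rates fixed)
strictly increases `ρ(d)` and hence `f(d) = ρ(d)/(1-ρ(d))` (when `ρ(d) < 1`); consequently
the fixed point of `f(d) = d` strictly increases. -/
theorem multicast_fixed_point_monotone_in_rates
    (M : ℕ) (ES : ℝ) (hES : 0 < ES)
    (μ ν : Fin M → ℝ) (hμ : ∀ i, 0 < μ i) (hν : ∀ i, 0 < ν i)
    (k : Fin M) (hk : μ k < ν k) (hother : ∀ i, i ≠ k → μ i = ν i)
    (ρ : (Fin M → ℝ) → ℝ → ℝ)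
    (hρ : ∀ lam d, ρ lam d = ES * ∑ i, lam i / (1 + lam i * d))
    (f : (Fin M → ℝ) → ℝ → ℝ)
    (hf : ∀ lam d, f lam d = ρ lam d / (1 - ρ lam d)) :
    (∀ d : ℝ, 0 < d → ρ μ d < ρ ν d) ∧
    (∀ d : ℝ, 0 < d → ρ ν d < 1 → f μ d < f ν d) ∧
    (∀ d₁ d₂ : ℝ, 0 < d₁ → 0 < d₂ →
      ρ μ d₁ < 1 → ρ ν d₂ < 1 →
      f μ d₁ = d₁ → f ν d₂ = d₂ → d₁ < d₂) := by
  -- denominators are positive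
  have hden : ∀ (x d : ℝ), 0 < x → 0 < d → 0 < 1 + x * d := by
    intro x d hx hd; nlinarith
  -- part 1
  have h1 : ∀ d : ℝ, 0 < d → ρ μ d < ρ ν d := by
    intro d hd
    rw [hρ, hρ]
    apply mul_lt_mul_of_pos_left _ hES
    apply Finset.sum_lt_sum
    · intro i _
      by_cases hi : i = k
      · subst hi
        rw [div_le_div_iff₀ (hden _ _ (hμ i) hd) (hden _ _ (hν i) hd)]
        nlinarith
      · rw [hother i hi]
    · exact ⟨k, Finset.mem_univ k, by
        rw [div_lt_div_iff₀ (hden _ _ (hμ k) hd) (hden _ _ (hν k) hd)]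
        nlinarith⟩
  -- x ↦ x/(1-x) strictly mono on (-∞, 1)
  have hmono : ∀ x y : ℝ, x < y → y < 1 → x / (1 - x) < y / (1 - y) := by
    intro x y hxy hy1
    rw [div_lt_div_iff₀ (by linarith) (by linarith)]
    nlinarith
  have hmono' : ∀ x y : ℝ, x ≤ y → y < 1 → x / (1 - x) ≤ y / (1 - y) := by
    intro x y hxy hy1
    rcases eq_or_lt_of_le hxy with h | h
    · rw [h]
    · exact le_of_lt (hmono x y h hy1)
  -- part 2
  have h2 : ∀ d : ℝ, 0 < d → ρ ν d < 1 → f μ d < f ν d := by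
    intro d hd hlt
    rw [hf, hf]
    exact hmono _ _ (h1 d hd) hlt
  -- ρ ν is antitone in d
  have hanti : ∀ d₁ d₂ : ℝ, 0 < d₂ → d₂ ≤ d₁ → ρ ν d₁ ≤ ρ ν d₂ := by
    intro d₁ d₂ hd2 hle
    rw [hρ, hρ]
    apply mul_le_mul_of_nonneg_left _ (le_of_lt hES)
    apply Finset.sum_le_sum
    intro i _
    rw [div_le_div_iff₀ (hden _ _ (hν i) (lt_of_lt_of_le hd2 hle)) (hden _ _ (hν i) hd2)]
    nlinarith [mul_nonneg (mul_pos (hν i) (hν i)).le (sub_nonneg.mpr hle)]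
  refine ⟨h1, h2, ?_⟩
  intro d₁ d₂ hd1 hd2 hρ1 hρ2 hfix1 hfix2
  by_contra hcon
  push_neg at hcon  -- d₂ ≤ d₁
  have hν1 : ρ ν d₁ ≤ ρ ν d₂ := hanti d₁ d₂ hd2 hcon
  have hν1lt : ρ ν d₁ < 1 := lt_of_le_of_lt hν1 hρ2
  have step1 : d₁ < f ν d₁ := by
    have := h2 d₁ hd1 hν1lt; rwa [hfix1] at this
  have step2 : f ν d₁ ≤ f ν d₂ := by
    rw [hf, hf]; exact hmono' _ _ hν1 hρ2
  rw [hfix2] at step2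
  linarith
end

section
/- For the PCS-M per-user M/G/1 approximation with deterministic service time s = L(1-C/M)/(1+CL/M) (so Var[S] = 0) and effective rates λ'_{ij} = λ_{ij}/(1+λ_{ij}d), the mean-delay fixed-point equation d = ρ(d)·s/(2(1-ρ(d))), where ρ(d) = s·Σ_{i=1}^M λ_{ij}/(1+λ_{ij}d), has a unique solution d* > d_0, where ρ(d_0) = 1 (or d_0 = 0 if ρ(0) < 1), and ρ(d*) < 1. -/
open Set

/-- PCS-M per-user M/G/1 approximation. With deterministic service time
`s = L(1-C/M)/(1+CL/M)` (so `Var[S] = 0`), the mean-delay fixed-point equation becomes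
`d = ρ(d)·s/(2(1-ρ(d)))` with `ρ(d) = s·∑ i, λ i/(1+λ i d)`. This equation has a unique
solution in `(d₀, ∞)` (where `ρ(d₀) = 1`, or `d₀ = 0` with `ρ(0) < 1`), and at the
solution `ρ < 1`. -/
theorem pcsm_fixed_point_unique
    (M : ℕ) (hM : 0 < M) (L C : ℝ) (hL : 0 < L) (hC : 0 < C) (hCM : C < (M : ℝ))
    (lam : Fin M → ℝ) (hlam : ∀ i, 0 < lam i)
    (s : ℝ) (hsdef : s = L * (1 - C / M) / (1 + C * L / M))
    (ρ g : ℝ → ℝ)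
    (hρ : ∀ d, ρ d = s * ∑ i, lam i / (1 + lam i * d))
    (hg : ∀ d, g d = ρ d * s / (2 * (1 - ρ d)))
    (d₀ : ℝ) (hd₀ : 0 ≤ d₀)
    (hd₀spec : ρ d₀ = 1 ∨ (d₀ = 0 ∧ ρ 0 < 1)) :
    (∃! d, d ∈ Ioi d₀ ∧ g d = d) ∧
    (∀ d ∈ Ioi d₀, g d = d → ρ d < 1) := by
  have hM' : (0:ℝ) < M := by exact_mod_cast hM
  have hs : 0 < s := by
    rw [hsdef]
    apply div_pos
    · apply mul_pos hL
      rw [sub_pos, div_lt_one hM']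
      exact hCM
    · positivity
  have hne : (Finset.univ : Finset (Fin M)).Nonempty := by
    simpa [Finset.univ_nonempty_iff] using Fin.pos_iff_nonempty.mp hM
  have hden : ∀ (i : Fin M) (d : ℝ), d₀ ≤ d → 0 < 1 + lam i * d := by
    intro i d hd
    have := hlam i
    nlinarith [hd₀]
  have hρpos : ∀ d, d₀ ≤ d → 0 < ρ d := by
    intro d hd
    rw [hρ]
    exact mul_pos hs (Finset.sum_pos (fun i _ => div_pos (hlam i) (hden i d hd)) hne)
  have hanti : ∀ x y, d₀ ≤ x → x < y → ρ y < ρ x := by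
    intro x y hx hxy
    rw [hρ, hρ]
    apply mul_lt_mul_of_pos_left _ hs
    apply Finset.sum_lt_sum_of_nonempty hne
    intro i _
    apply div_lt_div_of_pos_left (hlam i) (hden i x hx)
    nlinarith [hlam i]
  have hρlt1 : ∀ d, d₀ < d → ρ d < 1 := by
    intro d hd
    have h := hanti d₀ d le_rfl hd
    rcases hd₀spec with h1 | ⟨h0, h1⟩
    · linarith
    · rw [h0] at h; linarith
  set F : ℝ → ℝ := fun d => 2 * d * (1 - ρ d) - ρ d * s with hF
  -- equivalence between fixed point and F = 0
  have hequiv : ∀ d, d₀ < d → (g d = d ↔ F d = 0) := by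
    intro d hd
    have h1 : ρ d < 1 := hρlt1 d hd
    have h2 : (0:ℝ) < 2 * (1 - ρ d) := by linarith
    rw [hg, div_eq_iff (ne_of_gt h2)]
    constructor
    · intro h; simp only [hF]; linarith [h]
    · intro h; simp only [hF] at h; linarith [h]
  -- F strictly increasing on (d₀, ∞)
  have hFmono : ∀ x y, d₀ < x → x < y → F x < F y := by
    intro x y hx hxy
    have h1 : ρ x < 1 := hρlt1 x hx
    have h2 : ρ y < ρ x := hanti x y hx.le hxy
    have hy0 : (0:ℝ) < y := lt_of_le_of_lt hd₀ (hx.trans hxy)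
    simp only [hF]
    nlinarith [mul_pos (sub_pos.mpr hxy) (sub_pos.mpr h1),
      mul_pos hy0 (sub_pos.mpr h2)]
  -- F d₀ < 0
  have hFd₀ : F d₀ < 0 := by
    rcases hd₀spec with h1 | ⟨h0, h1⟩
    · simp only [hF, h1]; linarith
    · have := hρpos d₀ le_rfl
      simp only [hF, h0]
      rw [h0] at this
      nlinarith
  -- choose d₁ with F d₁ > 0
  obtain ⟨d₁, hd₁gt, hFd₁⟩ : ∃ d₁, d₀ < d₁ ∧ 0 < F d₁ := by
    refine ⟨max d₀ (max s (2 * s * M)) + 1, ?_, ?_⟩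
    · have := le_max_left d₀ (max s (2 * s * M)); linarith
    · set d₁ := max d₀ (max s (2 * s * M)) + 1 with hd₁
      have hd₁d₀ : d₀ < d₁ := by
        have := le_max_left d₀ (max s (2 * s * M)); simp only [hd₁]; linarith
      have hd₁s : s < d₁ := by
        have := (le_max_left s (2 * s * M)).trans (le_max_right d₀ _)
        simp only [hd₁]; linarith
      have hd₁sM : 2 * s * M < d₁ := by
        have := (le_max_right s (2 * s * M)).trans (le_max_right d₀ _)
        simp only [hd₁]; linarith
      have hd₁pos : (0:ℝ) < d₁ := lt_of_le_of_lt hd₀ hd₁d₀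
      have hbound : ρ d₁ ≤ s * M / d₁ := by
        rw [hρ]
        have hterm : ∀ i : Fin M, lam i / (1 + lam i * d₁) ≤ 1 / d₁ := by
          intro i
          rw [div_le_div_iff₀ (hden i d₁ hd₁d₀.le) hd₁pos]
          nlinarith [hlam i]
        calc s * ∑ i, lam i / (1 + lam i * d₁) ≤ s * ∑ _i : Fin M, 1 / d₁ := by
              apply mul_le_mul_of_nonneg_left _ hs.le
              exact Finset.sum_le_sum (fun i _ => hterm i)
          _ = s * M / d₁ := by
              rw [Finset.sum_const]
              simp [Finset.card_univ]
              ring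
      have hhalf : ρ d₁ ≤ 1 / 2 := by
        calc ρ d₁ ≤ s * M / d₁ := hbound
          _ ≤ 1 / 2 := by
            rw [div_le_div_iff₀ hd₁pos (by norm_num : (0:ℝ) < 2)]
            nlinarith
      simp only [hF]
      nlinarith
  -- IVT
  have hcont : ContinuousOn F (Icc d₀ d₁) := by
    have hρcont : ContinuousOn ρ (Icc d₀ d₁) := by
      have : ContinuousOn (fun d => s * ∑ i, lam i / (1 + lam i * d)) (Icc d₀ d₁) := by
        apply ContinuousOn.mul continuousOn_const
        apply continuousOn_finset_sum
        intro i _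
        apply ContinuousOn.div continuousOn_const
        · fun_prop
        · intro d hd
          exact ne_of_gt (hden i d hd.1)
      have heq : ρ = fun d => s * ∑ i, lam i / (1 + lam i * d) := funext hρ
      rw [heq]; exact this
    simp only [hF]
    fun_prop
  obtain ⟨d, hdmem, hFd⟩ : ∃ d ∈ Icc d₀ d₁, F d = 0 := by
    have h0mem : (0:ℝ) ∈ Icc (F d₀) (F d₁) := ⟨hFd₀.le, hFd₁.le⟩
    have := intermediate_value_Icc hd₁gt.le hcont h0mem
    obtain ⟨d, hd1, hd2⟩ := this
    exact ⟨d, hd1, hd2⟩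
  have hdgt : d₀ < d := by
    rcases eq_or_lt_of_le hdmem.1 with h | h
    · exfalso; rw [← h] at hFd; linarith
    · exact h
  refine ⟨⟨d, ⟨hdgt, (hequiv d hdgt).mpr hFd⟩, ?_⟩, ?_⟩
  · rintro y ⟨hy, hgy⟩
    have hFy : F y = 0 := (hequiv y hy).mp hgy
    rcases lt_trichotomy y d with h | h | h
    · exfalso; have := hFmono y d hy h; rw [hFy, hFd] at this; exact lt_irrefl _ this
    · exact h
    · exfalso; have := hFmono d y hdgt h; rw [hFy, hFd] at this; exact lt_irrefl _ this
  · intro d hd _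
    exact hρlt1 d hd
end
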